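/- For every integer m ≥ 7, the D3 graph G(m, 1, d) of order 2m with symmetry factor b = 1 and single chord index d 0 = 5 has girth 6. Consequently, the D3 chord index 5 yields a 3-regular bipartite Hamiltonian graph of girth 6 for every even order at least 14. -/

import Mathlib

/-- The chord/successor relation underlying the D3 graph: `y` follows `x` along the
Hamiltonian cycle, or `y` is reached from an odd-labelled `x` by the chord `d j`,
where `j` is the (unique) index with `x.val ≡ 2*j + 1 (mod 2*b)`. -/
def d3Rel (m b : ℕ) (d : Fin b → ℕ) (x y : ZMod (2 * m)) : Prop :=
  y = x + 1 ∨
    (Odd x.val ∧ ∃ j : Fin b, x.val % (2 * b) = 2 * (j : ℕ) + 1 ∧ y = x + (d j : ZMod (2 * m)))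

/-- The D3 graph `G(m, b, d)` of order `2*m` with symmetry factor `b` and
chord indices `d : Fin b → ℕ`: distinct vertices `x y : ZMod (2*m)` are adjacent iff
`y = x + 1`, or `y = x - 1`, or `x` is odd and `y = x + d j` for the unique `j` with
`x.val ≡ 2*j + 1 (mod 2*b)`, or `y` is odd and `x = y + d j` likewise. -/
def D3Graph (m b : ℕ) (d : Fin b → ℕ) : SimpleGraph (ZMod (2 * m)) where
  Adj x y := x ≠ y ∧ (d3Rel m b d x y ∨ d3Rel m b d y x)
  symm := by
    refine ⟨?_⟩
    intro x y h
    exact ⟨h.1.symm, h.2.symm⟩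
  loopless := by
    refine ⟨?_⟩
    intro x h
    exact h.1 rfl

/-!
Colour each vertex by its parity. Every edge joins an odd vertex `x` to `x + s` with
`s ∈ {-1, 1, 5}`, so the graph is bipartite and cubic, and the rim `0, 1, …, 2m-1` is a
Hamiltonian cycle. A `4`-cycle would give two odd vertices `a ≠ c` with two common neighbours,
i.e. two different representations `c - a = s₁ - s₂ = s₃ - s₄` with `sᵢ ∈ {-1, 1, 5}`; but the
nonzero differences `±2, ±4, ±6` of this set are pairwise distinct modulo `2m` as soon as
`2m > 12`. So the girth is at least `6`, and `1, 2, …, 6` (closed by the chord `1 → 6`) is a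
`6`-cycle.
-/

open SimpleGraph

lemma Int.eq_of_intCast_zmod_eq_of_abs_sub_lt {n : ℕ} {a b : ℤ} (h : (a : ZMod n) = b)
    (hab : |b - a| < n) : a = b := by
  rw [ZMod.intCast_eq_intCast_iff_dvd_sub] at h
  linarith [Int.eq_zero_of_abs_lt_dvd h hab]

lemma ZMod.natCast_finVal_injective {n k : ℕ} (hkn : k ≤ n) :
    Function.Injective (fun i : Fin k => ((i : ℕ) : ZMod n)) := by
  intro i j h
  simp only [ZMod.natCast_eq_natCast_iff', Nat.mod_eq_of_lt (i.isLt.trans_le hkn),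
    Nat.mod_eq_of_lt (j.isLt.trans_le hkn)] at h
  exact Fin.ext h

lemma Fin.eq_add_one_of_val_sub_eq_one {n : ℕ} [NeZero n] {i j : Fin n} (h : (j - i).val = 1) :
    j = i + 1 := by
  have h1 : 1 < n := h ▸ (j - i).isLt
  have : j - i = 1 := Fin.ext (by rw [h, Fin.val_one', Nat.mod_eq_of_lt h1])
  rw [← this, add_sub_cancel]

namespace SimpleGraph

variable {V : Type*} {G : SimpleGraph V}

lemma cycleGraph_isContained_of_adj_add_one {n : ℕ} [NeZero n] {f : Fin n → V}
    (hf : f.Injective) (hadj : ∀ i, G.Adj (f i) (f (i + 1))) : cycleGraph n ⊑ G := by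
  refine ⟨⟨⟨f, fun {i j} h => ?_⟩, hf⟩⟩
  rcases cycleGraph_adj'.mp h with h | h
  · exact Fin.eq_add_one_of_val_sub_eq_one h ▸ (hadj j).symm
  · exact Fin.eq_add_one_of_val_sub_eq_one h ▸ hadj i

lemma Walk.IsCycle.length_ne_four
    (hG : ∀ a b c e, G.Adj a b → G.Adj b c → G.Adj c e → G.Adj e a → a = c ∨ b = e)
    {u : V} {w : G.Walk u u} (hw : w.IsCycle) : w.length ≠ 4 := by
  intro h4
  rcases w with _ | ⟨hab, _ | ⟨hbc, _ | ⟨hce, _ | ⟨hea, _ | ⟨_, _⟩⟩⟩⟩⟩ <;>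
    simp only [Walk.length_cons, Walk.length_nil] at h4 <;> try omega
  rcases hG _ _ _ _ hab hbc hce hea with rfl | rfl <;> simpa using hw.support_nodup

end SimpleGraph

namespace D3Graph

variable {m : ℕ}

section

variable {b : ℕ} {d : Fin b → ℕ}

abbrev parity (m : ℕ) : ZMod (2 * m) →+* ZMod 2 := ZMod.castHom (dvd_mul_right 2 m) (ZMod 2)

lemma parity_eq_one_iff [NeZero m] (x : ZMod (2 * m)) : parity m x = 1 ↔ Odd x.val := by
  rw [ZMod.castHom_apply, ZMod.cast_eq_val, ZMod.natCast_eq_one_iff_odd]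

lemma exists_odd_eq_add_of_adj (hd : ∀ j, Odd (d j)) {x y : ZMod (2 * m)}
    (h : (D3Graph m b d).Adj x y) : ∃ s : ℤ, Odd s ∧ y = x + s := by
  obtain ⟨-, (rfl | ⟨-, j, -, rfl⟩) | (rfl | ⟨-, j, -, rfl⟩)⟩ := h
  · exact ⟨1, odd_one, by simp⟩
  · exact ⟨d j, by exact_mod_cast hd j, by simp⟩
  · exact ⟨-1, by decide, by simp⟩
  · exact ⟨-d j, by simpa using hd j, by simp⟩

lemma parity_eq_add_one_of_adj (hd : ∀ j, Odd (d j)) {x y : ZMod (2 * m)}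
    (h : (D3Graph m b d).Adj x y) : parity m y = parity m x + 1 := by
  obtain ⟨s, hs, rfl⟩ := exists_odd_eq_add_of_adj hd h
  rw [map_add, map_intCast, ZMod.intCast_eq_one_iff_odd.mpr hs]

lemma colorable_two (hd : ∀ j, Odd (d j)) : (D3Graph m b d).Colorable 2 :=
  ⟨Coloring.mk (parity m) fun h heq => by simpa [heq] using parity_eq_add_one_of_adj hd h⟩

lemma adj_add_one (hm : 1 ≤ m) (x : ZMod (2 * m)) : (D3Graph m b d).Adj x (x + 1) := by
  refine ⟨fun h => ?_, .inl (.inl rfl)⟩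
  have h1 : ((1 : ℤ) : ZMod (2 * m)) = ((0 : ℤ) : ZMod (2 * m)) := by
    simpa using add_eq_left.mp h.symm
  have := Int.eq_of_intCast_zmod_eq_of_abs_sub_lt h1 (abs_lt.mpr (by omega))
  omega

lemma cycleGraph_isContained (hm : 1 ≤ m) : cycleGraph (2 * m) ⊑ D3Graph m b d := by
  have : NeZero (2 * m) := ⟨by omega⟩
  refine cycleGraph_isContained_of_adj_add_one (f := fun i => ((i : ℕ) : ZMod (2 * m)))
    (ZMod.natCast_finVal_injective le_rfl) fun i => ?_
  have : (((i + 1 : Fin (2 * m)) : ℕ) : ZMod (2 * m)) = (i : ℕ) + 1 := by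
    simp [Fin.val_add, ZMod.natCast_mod]
  simpa [this] using adj_add_one hm _

lemma exists_isHamiltonianCycle (hm : 2 ≤ m) :
    ∃ (v : ZMod (2 * m)) (c : (D3Graph m b d).Walk v v), c.IsHamiltonianCycle := by
  have : NeZero m := ⟨by omega⟩
  obtain ⟨v, p, hp, hlen⟩ := (cycleGraph_isContained_iff (by omega)).mp
    (cycleGraph_isContained (d := d) (by omega : 1 ≤ m))
  exact ⟨v, p, Walk.isHamiltonianCycle_iff_isCycle_and_length_eq.mpr ⟨hp, by simp [hlen]⟩⟩

end

section

variable {d : Fin 1 → ℕ}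

lemma odd_of_eq_five (hd : d 0 = 5) (j : Fin 1) : Odd (d j) := by
  rw [Fin.fin_one_eq_zero j, hd]
  decide

def jumps : Finset ℤ := {-1, 1, 5}

lemma intCast_injOn_jumps (hm : 4 ≤ m) : Set.InjOn (Int.cast : ℤ → ZMod (2 * m)) jumps := by
  intro s hs t ht h
  simp only [jumps, Finset.coe_insert, Finset.coe_singleton, Set.mem_insert_iff,
    Set.mem_singleton_iff] at hs ht
  exact Int.eq_of_intCast_zmod_eq_of_abs_sub_lt h (abs_lt.mpr (by omega))

lemma parity_intCast_of_mem_jumps {s : ℤ} (hs : s ∈ jumps) : parity m s = 1 := by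
  rw [map_intCast, ZMod.intCast_eq_one_iff_odd]
  simp only [jumps, Finset.mem_insert, Finset.mem_singleton] at hs
  rcases hs with rfl | rfl | rfl <;> decide

lemma adj_iff_of_parity_eq_one (hm : 3 ≤ m) (hd : d 0 = 5) {x y : ZMod (2 * m)}
    (hx : parity m x = 1) : (D3Graph m 1 d).Adj x y ↔ ∃ s ∈ jumps, y = x + s := by
  have : NeZero m := ⟨by omega⟩
  constructor
  · intro h
    have hy := parity_eq_add_one_of_adj (odd_of_eq_five hd) h
    obtain ⟨-, (rfl | ⟨-, j, -, rfl⟩) | (rfl | ⟨hy', j, -, rfl⟩)⟩ := h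
    · exact ⟨1, by decide, by simp⟩
    · exact ⟨5, by decide, by simp [Fin.fin_one_eq_zero j, hd]⟩
    · exact ⟨-1, by decide, by simp⟩
    · rw [← parity_eq_one_iff] at hy'
      rw [hy', hx] at hy
      exact absurd hy (by decide)
  · rintro ⟨s, hs, rfl⟩
    refine ⟨fun h => ?_, ?_⟩
    · have hs0 : (s : ZMod (2 * m)) = ((0 : ℤ) : ZMod (2 * m)) := by
        simpa using (add_eq_left.mp h.symm)
      simp only [jumps, Finset.mem_insert, Finset.mem_singleton] at hs
      have := Int.eq_of_intCast_zmod_eq_of_abs_sub_lt hs0 (abs_lt.mpr (by omega))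
      omega
    simp only [jumps, Finset.mem_insert, Finset.mem_singleton] at hs
    rcases hs with rfl | rfl | rfl
    · exact Or.inr (Or.inl (by simp))
    · exact Or.inl (Or.inl (by simp))
    · refine Or.inl (Or.inr ⟨(parity_eq_one_iff x).mp hx, 0, ?_, by simp [hd]⟩)
      simpa [Nat.odd_iff] using (parity_eq_one_iff x).mp hx

lemma adj_iff_of_parity_eq_zero (hm : 3 ≤ m) (hd : d 0 = 5) {x y : ZMod (2 * m)}
    (hx : parity m x = 0) : (D3Graph m 1 d).Adj x y ↔ ∃ s ∈ jumps, y = x - s := by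
  have hy : (D3Graph m 1 d).Adj x y ∨ (∃ s ∈ jumps, y = x - s) → parity m y = 1 := by
    rintro (h | ⟨s, hs, rfl⟩)
    · rw [parity_eq_add_one_of_adj (odd_of_eq_five hd) h, hx, zero_add]
    · rw [map_sub, hx, parity_intCast_of_mem_jumps hs]; decide
  constructor
  · intro h
    have hy' := hy (.inl h)
    rw [(D3Graph m 1 d).adj_comm, adj_iff_of_parity_eq_one hm hd hy'] at h
    simpa [eq_sub_iff_add_eq, eq_comm] using h
  · intro h
    rw [(D3Graph m 1 d).adj_comm, adj_iff_of_parity_eq_one hm hd (hy (.inr h))]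
    simpa [eq_sub_iff_add_eq, eq_comm] using h

lemma ncard_setOf_adj (hm : 4 ≤ m) (hd : d 0 = 5) (x : ZMod (2 * m)) :
    {y | (D3Graph m 1 d).Adj x y}.ncard = 3 := by
  have hinj := intCast_injOn_jumps hm
  rcases (by decide : ∀ z : ZMod 2, z = 0 ∨ z = 1) (parity m x) with hx | hx
  · have : {y | (D3Graph m 1 d).Adj x y} = (fun s : ℤ => x - s) '' jumps := by
      ext y; simp [adj_iff_of_parity_eq_zero (by omega) hd hx, eq_comm]
    rw [this, Set.InjOn.ncard_image (f := fun s : ℤ => x - s)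
      (sub_right_injective.comp_injOn hinj), Set.ncard_coe_finset]
    rfl
  · have : {y | (D3Graph m 1 d).Adj x y} = (fun s : ℤ => x + s) '' jumps := by
      ext y; simp [adj_iff_of_parity_eq_one (by omega) hd hx, eq_comm]
    rw [this, Set.InjOn.ncard_image (f := fun s : ℤ => x + s)
      ((add_right_injective x).comp_injOn hinj), Set.ncard_coe_finset]
    rfl

lemma eq_and_eq_or_eq_and_eq_of_jumps_sub_eq (hm : 7 ≤ m) {s t u v : ℤ} (hs : s ∈ jumps)
    (ht : t ∈ jumps) (hu : u ∈ jumps) (hv : v ∈ jumps)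
    (h : ((s - t : ℤ) : ZMod (2 * m)) = ((u - v : ℤ) : ZMod (2 * m))) :
    s = t ∧ u = v ∨ s = u ∧ t = v := by
  simp only [jumps, Finset.mem_insert, Finset.mem_singleton] at hs ht hu hv
  have := Int.eq_of_intCast_zmod_eq_of_abs_sub_lt h (abs_lt.mpr (by omega))
  omega

lemma eq_or_eq_of_square (hm : 7 ≤ m) (hd : d 0 = 5) {a b c e : ZMod (2 * m)}
    (hab : (D3Graph m 1 d).Adj a b) (hbc : (D3Graph m 1 d).Adj b c)
    (hce : (D3Graph m 1 d).Adj c e) (hea : (D3Graph m 1 d).Adj e a) : a = c ∨ b = e := by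
  have hd' : ∀ j, Odd (d j) := odd_of_eq_five hd
  wlog ha : parity m a = 1 generalizing a b c e
  · have hb : parity m b = 1 := (parity_eq_add_one_of_adj hd' hab).trans
      ((by decide : ∀ z : ZMod 2, z ≠ 1 → z + 1 = 1) _ ha)
    exact (this hbc hce hea hab hb).symm.imp_left Eq.symm
  have hc : parity m c = 1 := by
    rw [parity_eq_add_one_of_adj hd' hbc, parity_eq_add_one_of_adj hd' hab, ha]; decide
  have adj_iff {x y} (hx : parity m x = 1) :=
    adj_iff_of_parity_eq_one (d := d) (y := y) (by omega) hd hx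
  obtain ⟨s₁, hs₁, rfl⟩ := (adj_iff ha).mp hab
  obtain ⟨s₂, hs₂, hb⟩ := (adj_iff hc).mp hbc.symm
  obtain ⟨s₃, hs₃, rfl⟩ := (adj_iff ha).mp hea.symm
  obtain ⟨s₄, hs₄, he⟩ := (adj_iff hc).mp hce
  have hsub : ((s₁ - s₂ : ℤ) : ZMod (2 * m)) = ((s₃ - s₄ : ℤ) : ZMod (2 * m)) := by
    push_cast; linear_combination hb - he
  rcases eq_and_eq_or_eq_and_eq_of_jumps_sub_eq hm hs₁ hs₂ hs₃ hs₄ hsub with ⟨rfl, -⟩ | ⟨rfl, -⟩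
  · exact .inl (add_right_cancel hb)
  · exact .inr rfl

lemma six_le_length_of_isCycle (hm : 7 ≤ m) (hd : d 0 = 5) {u : ZMod (2 * m)}
    {w : (D3Graph m 1 d).Walk u u} (hw : w.IsCycle) : 6 ≤ w.length := by
  obtain ⟨k, hk⟩ := two_colorable_iff_forall_loop_even.mp (colorable_two (odd_of_eq_five hd)) u w
  have := hw.three_le_length
  have := hw.length_ne_four fun _ _ _ _ => eq_or_eq_of_square hm hd
  omega

lemma cycleGraph_six_isContained (hm : 3 ≤ m) (hd : d 0 = 5) : cycleGraph 6 ⊑ D3Graph m 1 d := by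
  refine cycleGraph_isContained_of_adj_add_one (f := fun i => ((i : ℕ) : ZMod (2 * m)) + 1)
    ((add_left_injective 1).comp (ZMod.natCast_finVal_injective (by omega))) fun i => ?_
  have hchord : (D3Graph m 1 d).Adj 1 (1 + 5) :=
    (adj_iff_of_parity_eq_one hm hd (map_one _)).mpr ⟨5, by simp [jumps], by simp⟩
  by_cases hi : i = Fin.last 5
  · subst hi
    simpa [add_comm] using hchord.symm
  · rw [Fin.val_add_one_of_lt (Fin.lt_last_iff_ne_last.mpr hi), Nat.cast_succ]
    exact adj_add_one (by omega) _

lemma egirth_eq_six (hm : 7 ≤ m) (hd : d 0 = 5) : (D3Graph m 1 d).egirth = 6 := by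
  refine le_antisymm ?_ (le_egirth.mpr fun _ _ hw => mod_cast six_le_length_of_isCycle hm hd hw)
  obtain ⟨_, p, hp, hlen⟩ := (cycleGraph_isContained_iff (by norm_num)).mp
    (cycleGraph_six_isContained (by omega : 3 ≤ m) hd)
  exact (egirth_le_length hp).trans_eq (by rw [hlen]; rfl)

end

end D3Graph

/-- For every `m ≥ 7`, the D3 graph of order `2*m` with symmetry factor `1` and single chord
index `5` has girth `6`; moreover it is 3-regular, bipartite and Hamiltonian. -/
theorem stmt_4 (m : ℕ) (hm : 7 ≤ m) (d : Fin 1 → ℕ) (hd : d 0 = 5) :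
    (D3Graph m 1 d).egirth = 6 ∧
    (∀ v, {w | (D3Graph m 1 d).Adj v w}.ncard = 3) ∧
    (D3Graph m 1 d).Colorable 2 ∧
    (∃ (v : ZMod (2 * m)) (c : (D3Graph m 1 d).Walk v v), c.IsHamiltonianCycle) :=
  ⟨D3Graph.egirth_eq_six hm hd, D3Graph.ncard_setOf_adj (by omega) hd,
    D3Graph.colorable_two (D3Graph.odd_of_eq_five hd), D3Graph.exists_isHamiltonianCycle (by omega)⟩
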